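/- Let k, n, μ be natural numbers with μ ≥ 1. The number of functions f : Fin k → Fin n with exactly μ repeat positions equals ∑_{λ=0}^{μ} Z(k,n,μ+λ,λ). -/

import Mathlib

open Finset

/-- The set of "matching" positions of `f`: positions `i` such that some other
position `j ≠ i` has the same color, `f j = f i`. -/
def matchingSet {k n : ℕ} (f : Fin k → Fin n) : Finset (Fin k) :=
  Finset.univ.filter (fun i => ∃ j, j ≠ i ∧ f j = f i)

/-- The set of "repeat" positions of `f`: positions `i` such that some earlier
position `j < i` has the same color, `f j = f i`. -/
def repeatSet {k n : ℕ} (f : Fin k → Fin n) : Finset (Fin k) :=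
  Finset.univ.filter (fun i => ∃ j, j < i ∧ f j = f i)

/-- The set of "repeated" colors of `f`: colors used by at least two positions. -/
def repeatedColors {k n : ℕ} (f : Fin k → Fin n) : Finset (Fin n) :=
  Finset.univ.filter (fun c => 2 ≤ (Finset.univ.filter (fun i => f i = c)).card)

/-- `Z k n m l` is the number of sequences of `k` balls colored with at most `n`
colors having exactly `m` matching positions and exactly `l` repeated colors. -/
def Z (k n m l : ℕ) : ℕ :=
  Fintype.card {f : Fin k → Fin n // (matchingSet f).card = m ∧ (repeatedColors f).card = l}

/-- `dsurj m l` is the number of doubly surjective functions `Fin m → Fin l`,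
i.e. functions for which every element of `Fin l` has at least two preimages. -/
def dsurj (m l : ℕ) : ℕ :=
  Fintype.card {g : Fin m → Fin l // ∀ c : Fin l, 2 ≤ (Finset.univ.filter (fun i => g i = c)).card}

/-! A matching position is either a repeat or the first occurrence of a repeated color, and
distinct first occurrences have distinct colors; hence the number of matching positions is
`μ + λ`. The last occurrence of a repeated color is a repeat, so `λ ≤ μ`, and splitting the
colorings with `μ` repeats according to `λ` gives the sum. -/

section ColorSequence

variable {k n : ℕ} (f : Fin k → Fin n)

@[simp]
lemma mem_matchingSet {i : Fin k} : i ∈ matchingSet f ↔ ∃ j, j ≠ i ∧ f j = f i := by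
  simp [matchingSet]

@[simp]
lemma mem_repeatSet {i : Fin k} : i ∈ repeatSet f ↔ ∃ j, j < i ∧ f j = f i := by
  simp [repeatSet]

lemma mem_repeatedColors {c : Fin n} :
    c ∈ repeatedColors f ↔ 1 < (univ.filter fun i => f i = c).card := by
  simp [repeatedColors, Nat.succ_le_iff]

lemma repeatSet_subset_matchingSet : repeatSet f ⊆ matchingSet f := by
  intro i hi
  obtain ⟨j, hji, hfj⟩ := (mem_repeatSet f).1 hi
  exact (mem_matchingSet f).2 ⟨j, hji.ne, hfj⟩

lemma apply_mem_repeatedColors {i : Fin k} (hi : i ∈ matchingSet f) :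
    f i ∈ repeatedColors f := by
  obtain ⟨j, hji, hfj⟩ := (mem_matchingSet f).1 hi
  exact (mem_repeatedColors f).2 (one_lt_card.2 ⟨i, by simp, j, by simp [hfj], hji.symm⟩)

/-- Of two positions with the same color the later one is a repeat. -/
lemma injOn_compl_repeatSet : Set.InjOn f ↑(repeatSet f)ᶜ := by
  intro a ha b hb hab
  simp only [coe_compl, Set.mem_compl_iff, mem_coe, mem_repeatSet, not_exists, not_and] at ha hb
  rcases lt_trichotomy a b with hlt | heq | hgt
  · exact absurd hab (hb a hlt)
  · exact heq
  · exact absurd hab.symm (ha b hgt)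

/-- The first occurrence of a repeated color. -/
lemma exists_mem_matchingSet_sdiff_repeatSet {c : Fin n} (hc : c ∈ repeatedColors f) :
    ∃ i ∈ matchingSet f \ repeatSet f, f i = c := by
  set s := univ.filter fun i => f i = c
  have hs : 1 < s.card := (mem_repeatedColors f).1 hc
  have hne : s.Nonempty := card_pos.1 (by omega)
  have hfirst : f (s.min' hne) = c := (mem_filter.1 (min'_mem s hne)).2
  have hlast : f (s.max' hne) = c := (mem_filter.1 (max'_mem s hne)).2
  refine ⟨s.min' hne, mem_sdiff.2 ⟨?_, ?_⟩, hfirst⟩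
  · exact (mem_matchingSet f).2
      ⟨s.max' hne, (min'_lt_max'_of_card s hs).ne', hlast.trans hfirst.symm⟩
  · rintro hrep
    obtain ⟨j, hj, hfj⟩ := (mem_repeatSet f).1 hrep
    exact hj.not_ge (min'_le s j (mem_filter.2 ⟨mem_univ j, hfj.trans hfirst⟩))

/-- The last occurrence of a repeated color. -/
lemma exists_mem_repeatSet {c : Fin n} (hc : c ∈ repeatedColors f) :
    ∃ i ∈ repeatSet f, f i = c := by
  set s := univ.filter fun i => f i = c
  have hs : 1 < s.card := (mem_repeatedColors f).1 hc
  have hne : s.Nonempty := card_pos.1 (by omega)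
  have hfirst : f (s.min' hne) = c := (mem_filter.1 (min'_mem s hne)).2
  have hlast : f (s.max' hne) = c := (mem_filter.1 (max'_mem s hne)).2
  exact ⟨s.max' hne, (mem_repeatSet f).2
    ⟨s.min' hne, min'_lt_max'_of_card s hs, hfirst.trans hlast.symm⟩, hlast⟩

lemma image_repeatSet : (repeatSet f).image f = repeatedColors f := by
  ext c
  refine ⟨fun hc => ?_, fun hc => ?_⟩
  · obtain ⟨i, hi, rfl⟩ := mem_image.1 hc
    exact apply_mem_repeatedColors f (repeatSet_subset_matchingSet f hi)
  · obtain ⟨i, hi, rfl⟩ := exists_mem_repeatSet f hc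
    exact mem_image_of_mem f hi

lemma image_matchingSet_sdiff_repeatSet :
    (matchingSet f \ repeatSet f).image f = repeatedColors f := by
  ext c
  refine ⟨fun hc => ?_, fun hc => ?_⟩
  · obtain ⟨i, hi, rfl⟩ := mem_image.1 hc
    exact apply_mem_repeatedColors f (mem_sdiff.1 hi).1
  · obtain ⟨i, hi, rfl⟩ := exists_mem_matchingSet_sdiff_repeatSet f hc
    exact mem_image_of_mem f hi

lemma card_repeatedColors_le_card_repeatSet :
    (repeatedColors f).card ≤ (repeatSet f).card := by
  rw [← image_repeatSet f]
  exact card_image_le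

lemma card_matchingSet :
    (matchingSet f).card = (repeatSet f).card + (repeatedColors f).card := by
  have hinj : Set.InjOn f ↑(matchingSet f \ repeatSet f) :=
    (injOn_compl_repeatSet f).mono (by simp [Set.subset_def])
  rw [← image_matchingSet_sdiff_repeatSet f, card_image_of_injOn hinj, add_comm,
    card_sdiff_add_card_eq_card (repeatSet_subset_matchingSet f)]

end ColorSequence

theorem stmt14_general (k n μ : ℕ) :
    Fintype.card {f : Fin k → Fin n // (repeatSet f).card = μ} =
      ∑ l ∈ Finset.range (μ + 1), Z k n (μ + l) l := by
  rw [Fintype.card_subtype, card_eq_sum_card_fiberwise (f := fun f => (repeatedColors f).card)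
    (t := range (μ + 1)) fun f hf => ?_]
  · refine sum_congr rfl fun l _ => ?_
    rw [Z, Fintype.card_subtype, filter_filter]
    congr 1
    refine filter_congr fun f _ => ?_
    have := card_matchingSet f
    omega
  · have := card_repeatedColors_le_card_repeatSet f
    simp only [coe_filter, mem_univ, true_and, Set.mem_ofPred_eq] at hf
    simp only [coe_range, Set.mem_Iio]
    omega

/-- for `μ ≥ 1`, the number of colorings of `k` balls with at most `n`
colors having exactly `μ` repeat positions equals `∑_{l=0}^{μ} Z(k,n,μ+l,l)`. -/
theorem stmt14 (k n μ : ℕ) (hμ : 1 ≤ μ) :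
    Fintype.card {f : Fin k → Fin n // (repeatSet f).card = μ} =
      ∑ l ∈ Finset.range (μ + 1), Z k n (μ + l) l :=
  stmt14_general k n μ
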